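/- Let k ≥ 1, let p < q be odd primes with n = 2^k·p·q abundant, M = 2^{k+1} - 1, a = σ(n) - 2n. If n is weird, then pq ≠ r + s·p + t·q for all positive integers r, s, t with r, s, t ≤ M. -/

import Mathlib

/-- Sum of the positive divisors of `n`. -/
def sigma' (n : ℕ) : ℕ := ∑ d ∈ n.divisors, d

/-- `n` is abundant if `σ(n) > 2n`. -/
def Abundant (n : ℕ) : Prop := 2 * n < sigma' n

/-- `n` is pseudoperfect (in the weak sense) if some subset of its proper divisors sums to `n`. -/
def Pseudoperfect (n : ℕ) : Prop := ∃ s ⊆ n.properDivisors, ∑ d ∈ s, d = n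

/-- `n` is weird if it is abundant and no subset of its proper divisors sums to `n`. -/
def Weird (n : ℕ) : Prop := Abundant n ∧ ¬ Pseudoperfect n

/-!
With `M = 2 ^ (k + 1) - 1` one has `σ(n) = M (p + 1) (q + 1)` and `2n = (M + 1) p q`, so a
representation `p q = r + s p + t q` gives `σ(n) - 2n = (M - r) + (M - s) p + (M - t) q`.
Expanding the three coefficients (all `< 2 ^ (k + 1)`) in binary writes `σ(n) - 2n` as a sum of
distinct proper divisors `2 ^ j`, `2 ^ j p`, `2 ^ j q`; the remaining proper divisors then sum
to `n`, so `n` is pseudoperfect.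
-/

open Finset

theorem Nat.eq_of_two_pow_mul_odd_eq {i j a b : ℕ} (ha : Odd a) (hb : Odd b)
    (h : 2 ^ i * a = 2 ^ j * b) : i = j ∧ a = b := by
  wlog hij : i ≤ j generalizing i j a b
  · exact (this hb ha h.symm (le_of_not_ge hij)).imp Eq.symm Eq.symm
  obtain ⟨e, rfl⟩ := Nat.exists_eq_add_of_le hij
  rw [pow_add, mul_assoc, Nat.mul_left_cancel_iff (by positivity)] at h
  cases e with
  | zero => simpa using h
  | succ e =>
    rw [h, pow_succ, mul_comm _ 2, mul_assoc] at ha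
    exact absurd (even_two_mul _) (Nat.not_even_iff_odd.2 ha)

theorem two_pow_mul_mem_properDivisors {j k d m : ℕ} (hj : j ≤ k) (hd : d ∣ m) (hdm : d < m) :
    2 ^ j * d ∈ (2 ^ k * m).properDivisors :=
  Nat.mem_properDivisors.2 ⟨mul_dvd_mul (pow_dvd_pow 2 hj) hd,
    Nat.mul_lt_mul_of_le_of_lt (Nat.pow_le_pow_right two_pos hj) hdm (by positivity)⟩

/-- Write each `c d` in binary: since the odd part of `2 ^ j * d` determines `d`, the summands
`2 ^ j * d` obtained for different `d` are distinct. -/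
theorem exists_finset_sum_eq_sum_mul_odd (k : ℕ) (D : Finset ℕ) (hD : ∀ d ∈ D, Odd d)
    (c : ℕ → ℕ) (hc : ∀ d ∈ D, c d < 2 ^ (k + 1)) :
    ∃ T : Finset ℕ, (∀ x ∈ T, ∃ d ∈ D, ∃ j ≤ k, x = 2 ^ j * d) ∧
      ∑ x ∈ T, x = ∑ d ∈ D, c d * d := by
  let S := D.sigma fun d ↦ (c d).bitIndices.toFinset
  refine ⟨S.image fun x ↦ 2 ^ x.2 * x.1, ?_, ?_⟩
  · simp only [mem_image, forall_exists_index, and_imp]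
    rintro _ ⟨d, j⟩ hdj rfl
    obtain ⟨hd, hj⟩ := mem_sigma.1 hdj
    have hj : 2 ^ j < 2 ^ (k + 1) :=
      (Nat.two_pow_le_of_mem_bitIndices (List.mem_toFinset.1 hj)).trans_lt (hc d hd)
    exact ⟨d, hd, j, Nat.lt_succ_iff.1 ((Nat.pow_lt_pow_iff_right one_lt_two).1 hj), rfl⟩
  · rw [sum_image, sum_sigma]
    · refine sum_congr rfl fun d _ ↦ ?_
      rw [← sum_mul, sum_toFinset_bitIndices_two_pow]
    · rintro ⟨d, j⟩ hdj ⟨d', j'⟩ hdj' h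
      obtain ⟨rfl, rfl⟩ := Nat.eq_of_two_pow_mul_odd_eq (hD d (mem_sigma.1 hdj).1)
        (hD d' (mem_sigma.1 hdj').1) h
      rfl

theorem pseudoperfect_of_sum_add_two_mul_eq {n : ℕ} {T : Finset ℕ} (hT : T ⊆ n.properDivisors)
    (hsum : ∑ d ∈ T, d + 2 * n = sigma' n) : Pseudoperfect n := by
  refine ⟨n.properDivisors \ T, sdiff_subset, ?_⟩
  have hsplit := sum_sdiff hT (f := id)
  rw [sigma', Nat.sum_divisors_eq_sum_properDivisors_add_self] at hsum
  simp only [id] at hsplit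
  omega

theorem sigma'_prime {p : ℕ} (hp : p.Prime) : sigma' p = p + 1 := by
  rw [sigma', hp.divisors, sum_pair hp.one_lt.ne, add_comm]

theorem sigma'_two_pow (k : ℕ) : sigma' (2 ^ k) = 2 ^ (k + 1) - 1 := by
  rw [sigma', ← ArithmeticFunction.sigma_one_apply,
    ArithmeticFunction.sigma_one_apply_prime_pow Nat.prime_two, Nat.geomSum_eq le_rfl, Nat.div_one]

theorem sigma'_mul {m n : ℕ} (h : m.Coprime n) : sigma' (m * n) = sigma' m * sigma' n :=
  h.sum_divisors_mul

theorem sigma'_two_pow_mul_mul {k p q : ℕ} (hp : p.Prime) (hq : q.Prime) (hpo : Odd p)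
    (hqo : Odd q) (hpq : p ≠ q) :
    sigma' (2 ^ k * p * q) = (2 ^ (k + 1) - 1) * (p + 1) * (q + 1) := by
  have h2p : (2 ^ k).Coprime p := (Nat.coprime_two_left.2 hpo).pow_left k
  have h2q : (2 ^ k).Coprime q := (Nat.coprime_two_left.2 hqo).pow_left k
  have hcop : p.Coprime q := (Nat.coprime_primes hp hq).2 hpq
  rw [sigma'_mul (h2q.mul_left hcop), sigma'_mul h2p, sigma'_two_pow, sigma'_prime hp,
    sigma'_prime hq]

theorem weird_no_representation_general (k p q : ℕ) (hp : p.Prime) (hq : q.Prime)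
    (hop : Odd p) (hoq : Odd q) (hpq : p < q)
    (hw : Weird (2 ^ k * p * q)) :
    ∀ r s t : ℕ, 0 < r → r ≤ 2 ^ (k + 1) - 1 → 0 < s → s ≤ 2 ^ (k + 1) - 1 →
      0 < t → t ≤ 2 ^ (k + 1) - 1 → p * q ≠ r + s * p + t * q := by
  intro r s t _ hr _ hs _ ht hrep
  set M := 2 ^ (k + 1) - 1
  have hM : M + 1 = 2 ^ (k + 1) := Nat.sub_add_cancel Nat.one_le_two_pow
  have h1p : 1 < p := hp.one_lt
  have h1q : 1 < q := hq.one_lt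
  have hD : ∀ d ∈ ({1, p, q} : Finset ℕ), Odd d ∧ d ∣ p * q ∧ d < p * q := by
    simp only [mem_insert, mem_singleton, forall_eq_or_imp, forall_eq]
    exact ⟨⟨odd_one, one_dvd _, one_lt_mul h1p.le h1q⟩,
      ⟨hop, dvd_mul_right p q, lt_mul_of_one_lt_right hp.pos h1q⟩,
      ⟨hoq, dvd_mul_left q p, lt_mul_of_one_lt_left hq.pos h1p⟩⟩
  let c : ℕ → ℕ := fun d ↦ if d = 1 then M - r else if d = p then M - s else M - t
  obtain ⟨T, hT, hsum⟩ := exists_finset_sum_eq_sum_mul_odd k {1, p, q}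
    (fun d hd ↦ (hD d hd).1) c (fun d _ ↦ by dsimp only [c]; split_ifs <;> omega)
  have hTsub : T ⊆ (2 ^ k * p * q).properDivisors := by
    intro x hx
    obtain ⟨d, hd, j, hj, rfl⟩ := hT x hx
    rw [mul_assoc]
    exact two_pow_mul_mem_properDivisors hj (hD d hd).2.1 (hD d hd).2.2
  refine hw.2 (pseudoperfect_of_sum_add_two_mul_eq hTsub ?_)
  rw [hsum, sum_insert (by simp [h1p.ne, h1q.ne]), sum_pair hpq.ne,
    sigma'_two_pow_mul_mul hp hq hop hoq hpq.ne]
  simp only [c, ↓reduceIte, h1p.ne', h1q.ne', hpq.ne', mul_one]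
  zify [hr, hs, ht] at hrep hM ⊢
  linear_combination hrep - (p * q : ℤ) * hM

theorem weird_no_representation (k p q : ℕ) (hk : 1 ≤ k) (hp : p.Prime) (hq : q.Prime)
    (hop : Odd p) (hoq : Odd q) (hpq : p < q) (hab : Abundant (2 ^ k * p * q))
    (hw : Weird (2 ^ k * p * q)) :
    ∀ r s t : ℕ, 0 < r → r ≤ 2 ^ (k + 1) - 1 → 0 < s → s ≤ 2 ^ (k + 1) - 1 →
      0 < t → t ≤ 2 ^ (k + 1) - 1 → p * q ≠ r + s * p + t * q :=
  weird_no_representation_general k p q hp hq hop hoq hpq hw
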